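/- Let G = (V, E) be a finite simple graph with n vertices and m edges, with a fixed orientation assigning to each edge e = uv an ordered pair of its endpoints. Let G′ = (V′, E′) be the graph constructed from G as follows: replace each vertex u ∈ V by a path u₁u₂u₃ on three new vertices; for each edge e = uv ∈ E introduce four new vertices e_u, e_v, e_w, e_z and the edges e_u e_v, e_v e_w, e_w e_u, e_w e_z; and add the edges u₃ e_u and v₃ e_v. Then M = {u₂u₃ : u ∈ V} ∪ {e_u e_w : e = uv ∈ E} is a maximal matching of G′ with |M| = n + m. -/

import Mathlib

/-!
Each edge of `M` lies inside a single vertex path `u₁u₂u₃` or a single edge gadget, and it is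
determined by any one of its endpoints, so the edges of `M` are pairwise disjoint. The vertices
that `M` leaves exposed are the `u₁`, `e_v` and `e_z`, and no two of them are adjacent in `G′`,
so every edge of `G′` meets `M` and `M` is maximal. Finally `M` is the disjoint union of a copy
of `V` and a copy of `E`.
-/

/-- The generating relation of the graph `G′` built from `G` (with an orientation given by
`fst`/`snd`): each vertex `u` is replaced by a path `u₁u₂u₃` (the vertices
`Sum.inl (u, 0)`, `Sum.inl (u, 1)`, `Sum.inl (u, 2)`); each edge `e = uv` gets a gadget on
`e_u = Sum.inr (e, 0)`, `e_v = Sum.inr (e, 1)`, `e_w = Sum.inr (e, 2)`,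
`e_z = Sum.inr (e, 3)` with edges `e_u e_v, e_v e_w, e_w e_u, e_w e_z`; and the edges
`u₃ e_u` and `v₃ e_v` are added, where `u = fst e` and `v = snd e`. -/
def vcu2Rel {V : Type*} (G : SimpleGraph V) (fst snd : Sym2 V → V) :
    ((V × Fin 3) ⊕ (↥G.edgeSet × Fin 4)) → ((V × Fin 3) ⊕ (↥G.edgeSet × Fin 4)) → Prop
  | Sum.inl (u, i), Sum.inl (w, j) => u = w ∧ ((i = 0 ∧ j = 1) ∨ (i = 1 ∧ j = 2))
  | Sum.inr (e, i), Sum.inr (f, j) =>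
      e = f ∧ ((i = 0 ∧ j = 1) ∨ (i = 1 ∧ j = 2) ∨ (i = 2 ∧ j = 0) ∨ (i = 2 ∧ j = 3))
  | Sum.inl (u, i), Sum.inr (e, j) =>
      i = 2 ∧ ((j = 0 ∧ fst e.val = u) ∨ (j = 1 ∧ snd e.val = u))
  | _, _ => False

/-- The graph `G′` constructed from `G` and the orientation `fst`/`snd`. -/
def vcu2Graph {V : Type*} (G : SimpleGraph V) (fst snd : Sym2 V → V) :
    SimpleGraph ((V × Fin 3) ⊕ (↥G.edgeSet × Fin 4)) :=
  SimpleGraph.fromRel (vcu2Rel G fst snd)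

/-- A set of edges of `H` forming a matching: pairwise disjoint edges of `H`. -/
def IsMatchingSet {W : Type*} (H : SimpleGraph W) (M : Set (Sym2 W)) : Prop :=
  M ⊆ H.edgeSet ∧ ∀ e ∈ M, ∀ f ∈ M, e ≠ f → ∀ x, x ∈ e → x ∉ f

/-- A maximal matching: no edge of `H` can be added while keeping a matching. -/
def IsMaximalMatchingSet {W : Type*} (H : SimpleGraph W) (M : Set (Sym2 W)) : Prop :=
  IsMatchingSet H M ∧ ∀ e ∈ H.edgeSet, e ∉ M → ¬ IsMatchingSet H (insert e M)

theorem IsMatchingSet.isMaximalMatchingSet {W : Type*} {H : SimpleGraph W} {M : Set (Sym2 W)}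
    (hM : IsMatchingSet H M) (hcover : ∀ a b, H.Adj a b → ∃ f ∈ M, a ∈ f ∨ b ∈ f) :
    IsMaximalMatchingSet H M := by
  refine ⟨hM, fun e he heM hins => ?_⟩
  induction e using Sym2.ind with
  | _ a b =>
    obtain ⟨f, hfM, hf⟩ := hcover a b he
    have hne : s(a, b) ≠ f := fun h => heM (h ▸ hfM)
    have hfM' : f ∈ insert s(a, b) M := Set.mem_insert_of_mem _ hfM
    rcases hf with hf | hf
    · exact hins.2 _ (Set.mem_insert _ _) f hfM' hne a (Sym2.mem_mk_left a b) hf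
    · exact hins.2 _ (Set.mem_insert _ _) f hfM' hne b (Sym2.mem_mk_right a b) hf

section Vcu2
variable {V : Type*} (G : SimpleGraph V)

abbrev Vcu2Vertex : Type _ := (V × Fin 3) ⊕ (↥G.edgeSet × Fin 4)

def vcu2Matching : Set (Sym2 (Vcu2Vertex G)) :=
  (Set.range fun u : V => s(Sum.inl (u, 1), Sum.inl (u, 2))) ∪
  (Set.range fun e : ↥G.edgeSet => s(Sum.inr (e, 0), Sum.inr (e, 2)))

def vcu2MatchingEdge : Vcu2Vertex G → Sym2 (Vcu2Vertex G)
  | Sum.inl (u, _) => s(Sum.inl (u, 1), Sum.inl (u, 2))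
  | Sum.inr (e, _) => s(Sum.inr (e, 0), Sum.inr (e, 2))

variable {G}

theorem eq_vcu2MatchingEdge_of_mem {f : Sym2 (Vcu2Vertex G)}
    (hf : f ∈ vcu2Matching G) {x : Vcu2Vertex G} (hx : x ∈ f) :
    f = vcu2MatchingEdge G x := by
  rcases hf with ⟨u, rfl⟩ | ⟨e, rfl⟩ <;> rcases Sym2.mem_iff.mp hx with rfl | rfl <;> rfl

theorem vcu2Matching_subset_edgeSet (fst snd : Sym2 V → V) :
    vcu2Matching G ⊆ (vcu2Graph G fst snd).edgeSet := by
  rintro f (⟨u, rfl⟩ | ⟨e, rfl⟩) <;> simp [vcu2Graph, vcu2Rel]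

theorem isMatchingSet_vcu2Matching (fst snd : Sym2 V → V) :
    IsMatchingSet (vcu2Graph G fst snd) (vcu2Matching G) :=
  ⟨vcu2Matching_subset_edgeSet fst snd, fun _ he _ hf hne _ hxe hxf =>
    hne ((eq_vcu2MatchingEdge_of_mem he hxe).trans (eq_vcu2MatchingEdge_of_mem hf hxf).symm)⟩

theorem vcu2MatchingEdge_mem (x : Vcu2Vertex G) :
    vcu2MatchingEdge G x ∈ vcu2Matching G := by
  rcases x with ⟨u, _⟩ | ⟨e, _⟩
  exacts [Or.inl ⟨u, rfl⟩, Or.inr ⟨e, rfl⟩]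

theorem vcu2Rel_exists_mem_vcu2Matching {fst snd : Sym2 V → V}
    {a b : Vcu2Vertex G} (h : vcu2Rel G fst snd a b) :
    ∃ f ∈ vcu2Matching G, a ∈ f ∨ b ∈ f := by
  suffices a ∈ vcu2MatchingEdge G a ∨ b ∈ vcu2MatchingEdge G b by
    rcases this with ha | hb
    exacts [⟨_, vcu2MatchingEdge_mem a, .inl ha⟩, ⟨_, vcu2MatchingEdge_mem b, .inr hb⟩]
  rcases a with ⟨u, i⟩ | ⟨e, i⟩ <;> rcases b with ⟨w, j⟩ | ⟨e', j⟩ <;>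
    simp only [vcu2Rel, vcu2MatchingEdge, Sym2.mem_iff, Sum.inl.injEq, Sum.inr.injEq,
      Prod.mk.injEq, true_and] at h ⊢ <;> omega

theorem isMaximalMatchingSet_vcu2Matching (fst snd : Sym2 V → V) :
    IsMaximalMatchingSet (vcu2Graph G fst snd) (vcu2Matching G) := by
  refine (isMatchingSet_vcu2Matching fst snd).isMaximalMatchingSet fun a b hab => ?_
  rcases hab.2 with h | h
  · exact vcu2Rel_exists_mem_vcu2Matching h
  · simpa only [or_comm] using vcu2Rel_exists_mem_vcu2Matching h

theorem ncard_vcu2Matching [Finite V] :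
    (vcu2Matching G).ncard = Nat.card V + G.edgeSet.ncard := by
  have hinl : Function.Injective fun u : V =>
      s((Sum.inl (u, 1) : Vcu2Vertex G), Sum.inl (u, 2)) := fun u u' h => by
    simp_all
  have hinr : Function.Injective fun e : ↥G.edgeSet =>
      s((Sum.inr (e, 0) : Vcu2Vertex G), Sum.inr (e, 2)) := fun e e' h => by
    simp_all
  have hdisj : Disjoint
      (Set.range fun u : V => s((Sum.inl (u, 1) : Vcu2Vertex G), Sum.inl (u, 2)))
      (Set.range fun e : ↥G.edgeSet => s(Sum.inr (e, 0), Sum.inr (e, 2))) := by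
    rw [Set.disjoint_iff_forall_ne]
    rintro _ ⟨u, rfl⟩ _ ⟨e, rfl⟩ h
    simp at h
  rw [vcu2Matching, Set.ncard_union_eq hdisj, Set.ncard_range_of_injective hinl,
    Set.ncard_range_of_injective hinr, Nat.card_coe_set_eq]

end Vcu2

theorem stmt_16_general {V : Type*} [Fintype V] (G : SimpleGraph V) (fst snd : Sym2 V → V) :
    IsMaximalMatchingSet (vcu2Graph G fst snd)
      ((Set.range fun u : V => s(Sum.inl (u, 1), Sum.inl (u, 2))) ∪
       (Set.range fun e : ↥G.edgeSet => s(Sum.inr (e, 0), Sum.inr (e, 2)))) ∧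
    ((Set.range fun u : V => s(Sum.inl (u, 1), Sum.inl (u, 2))) ∪
       (Set.range fun e : ↥G.edgeSet =>
         s((Sum.inr (e, 0) : (V × Fin 3) ⊕ (↥G.edgeSet × Fin 4)), Sum.inr (e, 2)))).ncard =
      Fintype.card V + G.edgeSet.ncard := by
  exact ⟨isMaximalMatchingSet_vcu2Matching fst snd,
    Nat.card_eq_fintype_card (α := V) ▸ ncard_vcu2Matching⟩

/-- For a finite simple graph `G` with `n` vertices and `m` edges and a fixed
orientation `fst`/`snd` of its edges, the set
`M = {u₂u₃ : u ∈ V} ∪ {e_u e_w : e ∈ E}` is a maximal matching of `G′` with `|M| = n + m`. -/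
theorem stmt_16 {V : Type*} [Fintype V] (G : SimpleGraph V) (fst snd : Sym2 V → V)
    (horient : ∀ e ∈ G.edgeSet, e = s(fst e, snd e)) :
    IsMaximalMatchingSet (vcu2Graph G fst snd)
      ((Set.range fun u : V => s(Sum.inl (u, 1), Sum.inl (u, 2))) ∪
       (Set.range fun e : ↥G.edgeSet => s(Sum.inr (e, 0), Sum.inr (e, 2)))) ∧
    ((Set.range fun u : V => s(Sum.inl (u, 1), Sum.inl (u, 2))) ∪
       (Set.range fun e : ↥G.edgeSet =>
         s((Sum.inr (e, 0) : (V × Fin 3) ⊕ (↥G.edgeSet × Fin 4)), Sum.inr (e, 2)))).ncard =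
      Fintype.card V + G.edgeSet.ncard :=
  stmt_16_general G fst snd
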